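/- arXiv:math-ph/0605002 — 3 statements merged into one kernel-verified Lean document; each statement's English description precedes it below -/
import Mathlib

section
/- For any a > 0 and any b ∈ ℝ, the sum over integers k of exp(-a(k-b)²) satisfies √(π/a) - 1 ≤ Σ_{k∈ℤ} exp(-a(k-b)²) ≤ √(π/a) + 1. -/
/-!
For `f ≥ 0` increasing up to `b` and decreasing after it, the integral test on the
half-lines `x ≤ ⌊b⌋` and `x ≥ ⌊b⌋ + 1` compares the lattice values there with the integral,
up to one endpoint value on each side. The unit cell `[⌊b⌋, ⌊b⌋ + 1]` containing the peak
contributes at most `f b` to the integral, and its two lattice values satisfy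
`f ⌊b⌋ + f (⌊b⌋ + 1) ≤ ∫ f + f b`, since `f` dominates the left value left of `b` and the
right value right of `b`. Hence the lattice sum and the integral differ by at most `f b`,
which for the Gaussian is `1`, while its integral is `√(π / a)`.
-/

open Real MeasureTheory Set

section Unimodal

variable {f : ℝ → ℝ}

theorem intervalIntegral_ge_of_monotoneOn_of_antitoneOn {u b v : ℝ} (hub : u ≤ b)
    (hbv : b ≤ v) (hmono : MonotoneOn f (Icc u b)) (hanti : AntitoneOn f (Icc b v)) :
    (b - u) * f u + (v - b) * f v ≤ ∫ x in u..v, f x := by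
  have hint_left : IntervalIntegrable f volume u b :=
    MonotoneOn.intervalIntegrable (by rwa [uIcc_of_le hub])
  have hint_right : IntervalIntegrable f volume b v :=
    AntitoneOn.intervalIntegrable (by rwa [uIcc_of_le hbv])
  have hleft : (b - u) * f u ≤ ∫ x in u..b, f x := by
    calc (b - u) * f u = ∫ _ in u..b, f u := by simp
      _ ≤ ∫ x in u..b, f x := intervalIntegral.integral_mono_on hub intervalIntegrable_const
          hint_left fun x hx => hmono ⟨le_rfl, hub⟩ hx hx.1
  have hright : (v - b) * f v ≤ ∫ x in b..v, f x := by
    calc (v - b) * f v = ∫ _ in b..v, f v := by simp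
      _ ≤ ∫ x in b..v, f x := intervalIntegral.integral_mono_on hbv intervalIntegrable_const
          hint_right fun x hx => hanti hx ⟨hbv, le_rfl⟩ hx.2
  rw [← intervalIntegral.integral_add_adjacent_intervals hint_left hint_right]
  linarith

theorem AntitoneOn.integral_test_Ioi_one (hanti : AntitoneOn f (Ici 1))
    (hint : IntegrableOn f (Ioi 1)) (hf : ∀ x ∈ Ioi 1, 0 ≤ f x) :
    Summable (fun n : ℕ => f n) ∧ ∑' n : ℕ, f n ≤ f 0 + f 1 + ∫ x in Ioi 1, f x ∧
      f 0 + ∫ x in Ioi 1, f x ≤ ∑' n : ℕ, f n := by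
  have hanti' : AntitoneOn f (Ici ((1 : ℕ) : ℝ)) := by simpa using hanti
  have hint' : IntegrableOn f (Ioi ((1 : ℕ) : ℝ)) := by simpa using hint
  have hf' : ∀ x ∈ Ioi ((1 : ℕ) : ℝ), 0 ≤ f x := by simpa using hf
  have hsum := hanti'.summable_of_integrableOn_Ioi hint' hf'
  have hsum_succ : Summable (fun n : ℕ => f (n + 1)) := by
    simpa using (summable_nat_add_iff 1).2 hsum
  have hupper := hanti'.tsum_comp_add_le_integral 1 hint' hf'
  have hlower := hanti'.integral_le_tsum_comp_add 1 hsum hf'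
  push_cast at hupper hlower
  have hzero : ∑' n : ℕ, f n = f 0 + ∑' n : ℕ, f (n + 1) := by
    simpa using hsum.tsum_eq_zero_add
  have hone : ∑' n : ℕ, f (n + 1) = f 1 + ∑' n : ℕ, f (n + 1 + 1) := by
    rw [hsum_succ.tsum_eq_zero_add]; push_cast; ring_nf
  exact ⟨hsum, by linarith, by linarith⟩

theorem MonotoneOn.integral_test_Iic_zero (hmono : MonotoneOn f (Iic 0))
    (hint : IntegrableOn f (Iic 0)) (hf : ∀ x ∈ Iio 0, 0 ≤ f x) :
    Summable (fun n : ℕ => f (-(n + 1))) ∧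
      ∑' n : ℕ, f (-(n + 1)) ≤ ∫ x in Iic 0, f x ∧
      ∫ x in Iic 0, f x ≤ f 0 + ∑' n : ℕ, f (-(n + 1)) := by
  have hanti : AntitoneOn (fun x => f (-x)) (Ici 0) := fun x hx y hy hxy =>
    hmono (by simpa using hy) (by simpa using hx) (neg_le_neg hxy)
  have hint' : IntegrableOn (fun x => f (-x)) (Ioi 0) := by
    rw [← integrableOn_Ici_iff_integrableOn_Ioi,
      ← Measure.map_neg_eq_self (volume : Measure ℝ),
      measurableEmbedding_neg.integrableOn_map_iff]
    simpa [Function.comp_def] using hint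
  have hf' : ∀ x ∈ Ioi 0, 0 ≤ f (-x) := fun x hx => hf _ (by simpa using hx)
  have hsum := hanti.summable_of_integrableOn_Ioi_zero hint' hf'
  have hupper := hanti.tsum_add_one_le_integral hint' hf'
  have hlower := hanti.integral_le_tsum hsum hf'
  rw [integral_comp_neg_Ioi, neg_zero] at hupper hlower
  push_cast at hupper
  have hzero : ∑' n : ℕ, f (-n) = f 0 + ∑' n : ℕ, f (-(n + 1)) := by
    simpa using hsum.tsum_eq_zero_add
  exact ⟨by simpa using (summable_nat_add_iff 1).2 hsum, hupper, by linarith⟩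

theorem abs_tsum_int_sub_integral_le_of_mem_Icc {b : ℝ} (hb : b ∈ Icc (0 : ℝ) 1)
    (hmono : MonotoneOn f (Iic b)) (hanti : AntitoneOn f (Ici b)) (hint : Integrable f)
    (hf : ∀ x, 0 ≤ f x) : |∑' k : ℤ, f k - ∫ x, f x| ≤ f b := by
  have hpeak : ∀ x, f x ≤ f b := fun x =>
    (le_total x b).elim (fun h => hmono h self_mem_Iic h) (fun h => hanti self_mem_Ici h h)
  obtain ⟨hsum_pos, hpos_le, hpos_ge⟩ :=
    (hanti.mono (Ici_subset_Ici.2 hb.2)).integral_test_Ioi_one hint.integrableOn fun x _ => hf x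
  obtain ⟨hsum_neg, hneg_le, hneg_ge⟩ :=
    (hmono.mono (Iic_subset_Iic.2 hb.1)).integral_test_Iic_zero hint.integrableOn fun x _ => hf x
  have hsplit : ∑' k : ℤ, f k = ∑' n : ℕ, f n + ∑' n : ℕ, f (-(n + 1)) := by
    rw [tsum_of_nat_of_neg_add_one (f := fun k : ℤ => f k) (by simpa using hsum_pos)
      (by simpa using hsum_neg)]
    push_cast; rfl
  have hdecomp :
      ∫ x, f x = (∫ x in Iic 0, f x) + (∫ x in (0 : ℝ)..1, f x) + ∫ x in Ioi 1, f x := by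
    rw [add_assoc, intervalIntegral.integral_interval_add_Ioi hint.integrableOn hint.integrableOn,
      intervalIntegral.integral_Iic_add_Ioi hint.integrableOn hint.integrableOn]
  have hcell_le : ∫ x in (0 : ℝ)..1, f x ≤ f b := by
    simpa using intervalIntegral.integral_mono_on zero_le_one hint.intervalIntegrable
      intervalIntegrable_const fun x _ => hpeak x
  have hcell_ge := intervalIntegral_ge_of_monotoneOn_of_antitoneOn hb.1 hb.2
    (hmono.mono Icc_subset_Iic_self) (hanti.mono Icc_subset_Ici_self)
  have hends : (1 - b) * f 0 + b * f 1 ≤ f b := by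
    nlinarith [mul_le_mul_of_nonneg_left (hpeak 0) (sub_nonneg.2 hb.2),
      mul_le_mul_of_nonneg_left (hpeak 1) hb.1]
  rw [abs_sub_le_iff]
  constructor <;> linarith

theorem abs_tsum_int_sub_integral_le {b : ℝ} (hmono : MonotoneOn f (Iic b))
    (hanti : AntitoneOn f (Ici b)) (hint : Integrable f) (hf : ∀ x, 0 ≤ f x) :
    |∑' k : ℤ, f k - ∫ x, f x| ≤ f b := by
  set m : ℤ := ⌊b⌋
  have hmono' : MonotoneOn (fun x => f (x + m)) (Iic (b - m)) := fun x hx y hy hxy =>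
    hmono (by rw [mem_Iic, ← le_sub_iff_add_le]; exact hx)
      (by rw [mem_Iic, ← le_sub_iff_add_le]; exact hy) (add_le_add_left hxy _)
  have hanti' : AntitoneOn (fun x => f (x + m)) (Ici (b - m)) := fun x hx y hy hxy =>
    hanti (by rw [mem_Ici, ← sub_le_iff_le_add]; exact hx)
      (by rw [mem_Ici, ← sub_le_iff_le_add]; exact hy) (add_le_add_left hxy _)
  have key := abs_tsum_int_sub_integral_le_of_mem_Icc
    ⟨Int.fract_nonneg b, (Int.fract_lt_one b).le⟩ hmono' hanti' (hint.comp_add_right m)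
    fun x => hf _
  have hshift : ∑' k : ℤ, f (k + m) = ∑' k : ℤ, f k := by
    simpa using (Equiv.addRight m).tsum_eq (fun k : ℤ => f k)
  rwa [hshift, integral_add_right_eq_self, Int.fract_add_floor] at key

end Unimodal

theorem monotoneOn_exp_neg_mul_sub_sq {a : ℝ} (ha : 0 ≤ a) (b : ℝ) :
    MonotoneOn (fun x => exp (-a * (x - b) ^ 2)) (Iic b) := fun x hx y hy hxy => by
  simp only [mem_Iic] at hx hy
  refine exp_le_exp.2 ?_
  nlinarith [mul_nonneg ha (mul_nonneg (sub_nonneg.2 hxy) (by linarith : 0 ≤ 2 * b - x - y))]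

theorem antitoneOn_exp_neg_mul_sub_sq {a : ℝ} (ha : 0 ≤ a) (b : ℝ) :
    AntitoneOn (fun x => exp (-a * (x - b) ^ 2)) (Ici b) := fun x hx y hy hxy => by
  simp only [mem_Ici] at hx hy
  refine exp_le_exp.2 ?_
  nlinarith [mul_nonneg ha (mul_nonneg (sub_nonneg.2 hxy) (by linarith : 0 ≤ x + y - 2 * b))]

theorem integral_exp_neg_mul_sub_sq (a b : ℝ) :
    ∫ x, exp (-a * (x - b) ^ 2) = √(π / a) := by
  rw [integral_sub_right_eq_self (fun x => exp (-a * x ^ 2)) b, integral_gaussian]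

theorem gaussian_lattice_sum_bounds (a b : ℝ) (ha : 0 < a) :
    Real.sqrt (π / a) - 1 ≤ ∑' k : ℤ, Real.exp (-a * ((k : ℝ) - b) ^ 2) ∧
    ∑' k : ℤ, Real.exp (-a * ((k : ℝ) - b) ^ 2) ≤ Real.sqrt (π / a) + 1 := by
  have h := abs_tsum_int_sub_integral_le (monotoneOn_exp_neg_mul_sub_sq ha.le b)
    (antitoneOn_exp_neg_mul_sub_sq ha.le b) ((integrable_exp_neg_mul_sq ha).comp_sub_right b)
    fun x => (exp_pos _).le
  rw [integral_exp_neg_mul_sub_sq, sub_self, zero_pow two_ne_zero, mul_zero, exp_zero] at h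
  constructor <;> linarith [abs_sub_le_iff.1 h]
end

section
/- Let a, b > 0 with √(4πa) > b > 0. Then [(√(4πa) - b)/(√(4πa) + b)]^d ≤ (Σ_{z∈ℤ^d} exp(-(b²/(4a))·(x/b - z)²)) / (Σ_{z∈ℤ^d} exp(-(b²/(4a))·z²)) ≤ [(√(4πa) + b)/(√(4πa) - b)]^d for every x ∈ ℝ^d. -/
/-!
The lattice sum factorises over coordinates into one-dimensional theta sums
`θ(y) = ∑_{z ∈ ℤ} f (y - z)` with `f u = exp (-t u²)`, `t = b² / (4a)`. Since `f` is even, for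
`p = fract y` the sum `θ(y)` is the sum of the half-line sums `∑_{n ∈ ℕ} f (n + p)` and
`∑_{n ∈ ℕ} f (n + 1 - p)`. As `f` decreases on `[0, ∞)`, the integral test gives
`∫₀^∞ f - p f(0) ≤ ∑_{n ∈ ℕ} f (n + p) ≤ ∫₀^∞ f + (1 - p) f(0)` for `0 ≤ p ≤ 1`, hence
`|θ(y) - √(π / t)| ≤ f(0) = 1`. Since `√(π / t) = √(4πa) / b > 1`, every factor
`θ(x_i / b) / θ(0)` lies between `(√(4πa) - b) / (√(4πa) + b)` and its reciprocal.
-/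

open Real MeasureTheory Set

section IntegralTest

variable {f : ℝ → ℝ} {p : ℝ}

theorem MeasureTheory.IntegrableOn.comp_add_right_Ioi (integrable : IntegrableOn f (Ioi 0))
    (hp : 0 ≤ p) : IntegrableOn (fun u => f (u + p)) (Ioi 0) := by
  simpa [Function.comp_def] using ((measurePreserving_add_right volume p).integrableOn_comp_preimage
    (measurableEmbedding_addRight p)).mpr (integrable.mono_set (Ioi_subset_Ioi hp))

theorem integral_Ioi_comp_add_right (f : ℝ → ℝ) (p : ℝ) :
    ∫ u in Ioi 0, f (u + p) = ∫ u in Ioi p, f u := by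
  simpa using (measurePreserving_add_right volume p).setIntegral_preimage_emb
    (measurableEmbedding_addRight p) f (Ioi p)

theorem AntitoneOn.comp_add_right_Ici (anti : AntitoneOn f (Ici 0)) (hp : 0 ≤ p) :
    AntitoneOn (fun u => f (u + p)) (Ici 0) := fun _ hu _ hv huv =>
  anti (add_nonneg hu hp) (add_nonneg hv hp) (add_le_add_left huv p)

theorem AntitoneOn.intervalIntegral_le_mul {a b : ℝ} (anti : AntitoneOn f (Icc a b))
    (hab : a ≤ b) : ∫ u in a..b, f u ≤ (b - a) * f a := by
  simpa using intervalIntegral.integral_mono_on (μ := volume) hab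
    (AntitoneOn.intervalIntegrable (by rwa [uIcc_of_le hab])) intervalIntegrable_const
    fun u hu => anti ⟨le_rfl, hab⟩ hu hu.1

theorem AntitoneOn.mul_le_intervalIntegral {a b : ℝ} (anti : AntitoneOn f (Icc a b))
    (hab : a ≤ b) : (b - a) * f b ≤ ∫ u in a..b, f u := by
  simpa using intervalIntegral.integral_mono_on (μ := volume) hab intervalIntegrable_const
    (AntitoneOn.intervalIntegrable (by rwa [uIcc_of_le hab])) fun u hu => anti hu ⟨hab, le_rfl⟩ hu.2

theorem AntitoneOn.summable_nat_add (anti : AntitoneOn f (Ici 0))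
    (integrable : IntegrableOn f (Ioi 0)) (nonneg : ∀ u ∈ Ioi 0, 0 ≤ f u) (hp : 0 ≤ p) :
    Summable fun n : ℕ => f (n + p) :=
  (anti.comp_add_right_Ici hp).summable_of_integrableOn_Ioi_zero
    (integrable.comp_add_right_Ioi hp) fun _ hu => nonneg _ (add_pos_of_pos_of_nonneg hu hp)

theorem AntitoneOn.integral_Ioi_sub_mul_le_tsum_nat_add (anti : AntitoneOn f (Ici 0))
    (integrable : IntegrableOn f (Ioi 0)) (nonneg : ∀ u ∈ Ioi 0, 0 ≤ f u) (hp : 0 ≤ p) :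
    (∫ u in Ioi 0, f u) - p * f 0 ≤ ∑' n : ℕ, f (n + p) := by
  have head : ∫ u in (0)..p, f u ≤ p * f 0 := by
    simpa using (anti.mono Icc_subset_Ici_self).intervalIntegral_le_mul hp
  calc (∫ u in Ioi 0, f u) - p * f 0
      = (∫ u in (0)..p, f u) + (∫ u in Ioi p, f u) - p * f 0 := by
        rw [intervalIntegral.integral_interval_add_Ioi integrable
          (integrable.mono_set (Ioi_subset_Ioi hp))]
    _ ≤ ∫ u in Ioi p, f u := by linarith
    _ = ∫ u in Ioi 0, f (u + p) := (integral_Ioi_comp_add_right f p).symm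
    _ ≤ ∑' n : ℕ, f (n + p) :=
      (anti.comp_add_right_Ici hp).integral_le_tsum (anti.summable_nat_add integrable nonneg hp)
        fun _ hu => nonneg _ (add_pos_of_pos_of_nonneg hu hp)

theorem AntitoneOn.tsum_nat_add_le_integral_Ioi_add_mul (anti : AntitoneOn f (Ici 0))
    (integrable : IntegrableOn f (Ioi 0)) (nonneg : ∀ u ∈ Ioi 0, 0 ≤ f u) (hp : 0 ≤ p)
    (hp₁ : p ≤ 1) :
    ∑' n : ℕ, f (n + p) ≤ (∫ u in Ioi 0, f u) + (1 - p) * f 0 := by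
  have head : p * f p ≤ ∫ u in (0)..p, f u := by
    simpa using (anti.mono Icc_subset_Ici_self).mul_le_intervalIntegral hp
  have hfp : (1 - p) * f p ≤ (1 - p) * f 0 :=
    mul_le_mul_of_nonneg_left (anti (mem_Ici.mpr le_rfl) hp hp) (by linarith)
  calc ∑' n : ℕ, f (n + p)
      ≤ f (0 + p) + ∫ u in Ioi 0, f (u + p) :=
        (anti.comp_add_right_Ici hp).tsum_le_integral
          (integrable.comp_add_right_Ioi hp) fun _ hu => nonneg _ (add_pos_of_pos_of_nonneg hu hp)
    _ = f p + ∫ u in Ioi p, f u := by rw [zero_add, integral_Ioi_comp_add_right]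
    _ ≤ (∫ u in (0)..p, f u) + (∫ u in Ioi p, f u) + (1 - p) * f 0 := by linarith
    _ = (∫ u in Ioi 0, f u) + (1 - p) * f 0 := by
        rw [intervalIntegral.integral_interval_add_Ioi integrable
          (integrable.mono_set (Ioi_subset_Ioi hp))]

theorem hasSum_int_add_fract_iff {M : Type*} [AddCommMonoid M] [TopologicalSpace M]
    (g : ℝ → M) (y : ℝ) (s : M) :
    HasSum (fun z : ℤ => g (z + y)) s ↔ HasSum (fun z : ℤ => g (z + Int.fract y)) s := by
  conv_rhs => rw [← (Equiv.addRight ⌊y⌋).hasSum_iff]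
  congr! 2 with z
  simp only [Function.comp_apply, Equiv.coe_addRight, Int.cast_add]
  rw [add_assoc, Int.floor_add_fract]

theorem Function.Even.hasSum_int_add (even : f.Even) (anti : AntitoneOn f (Ici 0))
    (integrable : IntegrableOn f (Ioi 0)) (nonneg : ∀ u ∈ Ioi 0, 0 ≤ f u) (hp : 0 ≤ p)
    (hp₁ : p ≤ 1) :
    HasSum (fun z : ℤ => f (z + p)) (∑' n : ℕ, f (n + p) + ∑' n : ℕ, f (n + (1 - p))) := by
  refine HasSum.of_nat_of_neg_add_one (by exact_mod_cast
    (anti.summable_nat_add integrable nonneg hp).hasSum) ?_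
  convert (anti.summable_nat_add integrable nonneg (sub_nonneg.mpr hp₁)).hasSum using 2 with n
  rw [← even]
  push_cast
  ring_nf

theorem Function.Even.abs_tsum_int_add_sub_integral_le (even : f.Even)
    (anti : AntitoneOn f (Ici 0)) (integrable : IntegrableOn f (Ioi 0))
    (nonneg : ∀ u ∈ Ioi 0, 0 ≤ f u) (y : ℝ) :
    |(∑' z : ℤ, f (z + y)) - 2 * ∫ u in Ioi 0, f u| ≤ f 0 := by
  have hp : 0 ≤ Int.fract y := Int.fract_nonneg y
  have hp₁ : Int.fract y ≤ 1 := (Int.fract_lt_one y).le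
  have hq : 0 ≤ 1 - Int.fract y := sub_nonneg.mpr hp₁
  rw [((hasSum_int_add_fract_iff f y _).mpr
    (even.hasSum_int_add anti integrable nonneg hp hp₁)).tsum_eq, abs_sub_le_iff]
  constructor
  · linarith [anti.tsum_nat_add_le_integral_Ioi_add_mul integrable nonneg hp hp₁,
      anti.tsum_nat_add_le_integral_Ioi_add_mul integrable nonneg hq (by linarith)]
  · linarith [anti.integral_Ioi_sub_mul_le_tsum_nat_add integrable nonneg hp,
      anti.integral_Ioi_sub_mul_le_tsum_nat_add integrable nonneg hq]

theorem Function.Even.summable_int_add (even : f.Even) (anti : AntitoneOn f (Ici 0))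
    (integrable : IntegrableOn f (Ioi 0)) (nonneg : ∀ u ∈ Ioi 0, 0 ≤ f u) (y : ℝ) :
    Summable fun z : ℤ => f (z + y) :=
  ((hasSum_int_add_fract_iff f y _).mpr (even.hasSum_int_add anti integrable nonneg
    (Int.fract_nonneg y) (Int.fract_lt_one y).le)).summable

end IntegralTest

theorem hasSum_prod_pi_of_nonneg {ι : Type*} {d : ℕ} {f : Fin d → ι → ℝ} {s : Fin d → ℝ}
    (nonneg : ∀ i z, 0 ≤ f i z) (hf : ∀ i, HasSum (f i) (s i)) :
    HasSum (fun z : Fin d → ι => ∏ i, f i (z i)) (∏ i, s i) := by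
  induction d with
  | zero => simp
  | succ d ih =>
    have tail : HasSum (fun z : Fin d → ι => ∏ i : Fin d, f i.succ (z i)) (∏ i : Fin d, s i.succ) :=
      ih (f := fun i => f i.succ) (fun i => nonneg i.succ) (fun i => hf i.succ)
    have summable : Summable fun p : ι × (Fin d → ι) => f 0 p.1 * ∏ i : Fin d, f i.succ (p.2 i) :=
      Summable.mul_of_nonneg (f := f 0) (g := fun w : Fin d → ι => ∏ i : Fin d, f i.succ (w i))
        (hf 0).summable tail.summable (nonneg 0)
        fun w => Finset.prod_nonneg fun i _ => nonneg i.succ (w i)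
    rw [Fin.prod_univ_succ, ← (Fin.consEquiv fun _ => ι).hasSum_iff]
    simpa [Function.comp_def, Fin.consEquiv, Fin.prod_univ_succ] using (hf 0).mul tail summable

section Gaussian

variable {t : ℝ}

theorem Real.even_exp_neg_mul_sq (t : ℝ) : Function.Even fun u : ℝ => exp (-t * u ^ 2) :=
  fun u => by simp only [neg_sq]

theorem Real.antitoneOn_exp_neg_mul_sq (ht : 0 ≤ t) :
    AntitoneOn (fun u : ℝ => exp (-t * u ^ 2)) (Ici 0) := fun u hu v _ huv => by
  simp only [exp_le_exp]
  nlinarith [mul_le_mul huv huv (mem_Ici.mp hu) ((mem_Ici.mp hu).trans huv)]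

theorem Real.summable_int_exp_neg_mul_sq_sub (ht : 0 < t) (y : ℝ) :
    Summable fun z : ℤ => exp (-t * (y - z) ^ 2) := by
  convert (even_exp_neg_mul_sq t).summable_int_add (antitoneOn_exp_neg_mul_sq ht.le)
    (integrable_exp_neg_mul_sq ht).integrableOn (fun u _ => (exp_pos _).le) (-y) using 3
  ring

theorem Real.abs_tsum_int_exp_neg_mul_sq_sub_sub_sqrt_le (ht : 0 < t) (y : ℝ) :
    |(∑' z : ℤ, exp (-t * (y - z) ^ 2)) - √(π / t)| ≤ 1 := by
  have := (even_exp_neg_mul_sq t).abs_tsum_int_add_sub_integral_le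
    (antitoneOn_exp_neg_mul_sq ht.le) (integrable_exp_neg_mul_sq ht).integrableOn
    (fun u _ => (exp_pos _).le) (-y)
  rw [integral_gaussian_Ioi] at this
  convert this using 4
  · ext z
    ring_nf
  · ring
  · simp

theorem Real.tsum_pi_exp_neg_mul_sum_sq_sub {d : ℕ} (ht : 0 < t) (y : Fin d → ℝ) :
    ∑' z : Fin d → ℤ, exp (-t * ∑ i, (y i - z i) ^ 2) =
      ∏ i, ∑' z : ℤ, exp (-t * (y i - z) ^ 2) := by
  simp_rw [Finset.mul_sum, exp_sum]
  exact (hasSum_prod_pi_of_nonneg (fun _ _ => (exp_pos _).le)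
    fun i => (summable_int_exp_neg_mul_sq_sub ht (y i)).hasSum).tsum_eq

end Gaussian

theorem div_mem_Icc_of_abs_sub_le_one {c u v : ℝ} (hc : 1 < c) (hu : |u - c| ≤ 1)
    (hv : |v - c| ≤ 1) : u / v ∈ Icc ((c - 1) / (c + 1)) ((c + 1) / (c - 1)) := by
  obtain ⟨hu₁, hu₂⟩ := abs_le.mp hu
  obtain ⟨hv₁, hv₂⟩ := abs_le.mp hv
  exact ⟨div_le_div₀ (by linarith) (by linarith) (by linarith) (by linarith),
    div_le_div₀ (by linarith) (by linarith) (by linarith) (by linarith)⟩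

theorem gaussian_lattice_ratio_bounds_general (d : ℕ) (a b : ℝ)
    (ha : 0 < a) (hb : 0 < b) (hab : b < Real.sqrt (4 * π * a))
    (x : Fin d → ℝ) :
    ((Real.sqrt (4 * π * a) - b) / (Real.sqrt (4 * π * a) + b)) ^ d ≤
      (∑' z : Fin d → ℤ,
          Real.exp (-(b ^ 2 / (4 * a)) * ∑ i, (x i / b - (z i : ℝ)) ^ 2)) /
      (∑' z : Fin d → ℤ,
          Real.exp (-(b ^ 2 / (4 * a)) * ∑ i, ((z i : ℝ)) ^ 2)) ∧
    (∑' z : Fin d → ℤ,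
        Real.exp (-(b ^ 2 / (4 * a)) * ∑ i, (x i / b - (z i : ℝ)) ^ 2)) /
      (∑' z : Fin d → ℤ,
        Real.exp (-(b ^ 2 / (4 * a)) * ∑ i, ((z i : ℝ)) ^ 2)) ≤
      ((Real.sqrt (4 * π * a) + b) / (Real.sqrt (4 * π * a) - b)) ^ d := by
  set s := √(4 * π * a)
  set t := b ^ 2 / (4 * a)
  have ht : 0 < t := by positivity
  have hsqrt : √(π / t) = s / b := by
    rw [show π / t = 4 * π * a / b ^ 2 by simp only [t]; field_simp, sqrt_div' _ (sq_nonneg b),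
      sqrt_sq hb.le]
  have hone_lt : 1 < s / b := (one_lt_div hb).mpr hab
  have hden := tsum_pi_exp_neg_mul_sum_sq_sub ht (0 : Fin d → ℝ)
  simp only [Pi.zero_apply, zero_sub, neg_sq] at hden
  rw [tsum_pi_exp_neg_mul_sum_sq_sub ht, hden, ← Finset.prod_div_distrib]
  have factor (i : Fin d) := div_mem_Icc_of_abs_sub_le_one hone_lt
    (hsqrt ▸ abs_tsum_int_exp_neg_mul_sq_sub_sub_sqrt_le ht (x i / b))
    (by simpa only [hsqrt, zero_sub, neg_sq] using abs_tsum_int_exp_neg_mul_sq_sub_sub_sqrt_le ht 0)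
  have hlower : (s - b) / (s + b) = (s / b - 1) / (s / b + 1) := by field_simp
  have hupper : (s + b) / (s - b) = (s / b + 1) / (s / b - 1) := by field_simp
  have hlower_nonneg : 0 ≤ (s / b - 1) / (s / b + 1) := div_nonneg (by linarith) (by linarith)
  rw [hlower, hupper]
  constructor
  · rw [← Fin.prod_const]
    exact Finset.prod_le_prod (fun _ _ => hlower_nonneg) fun i _ => (factor i).1
  · rw [← Fin.prod_const]
    exact Finset.prod_le_prod (fun i _ => hlower_nonneg.trans (factor i).1) fun i _ => (factor i).2

theorem gaussian_lattice_ratio_bounds (d : ℕ) (hd : 1 ≤ d) (a b : ℝ)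
    (ha : 0 < a) (hb : 0 < b) (hab : b < Real.sqrt (4 * π * a))
    (x : Fin d → ℝ) :
    ((Real.sqrt (4 * π * a) - b) / (Real.sqrt (4 * π * a) + b)) ^ d ≤
      (∑' z : Fin d → ℤ,
          Real.exp (-(b ^ 2 / (4 * a)) * ∑ i, (x i / b - (z i : ℝ)) ^ 2)) /
      (∑' z : Fin d → ℤ,
          Real.exp (-(b ^ 2 / (4 * a)) * ∑ i, ((z i : ℝ)) ^ 2)) ∧
    (∑' z : Fin d → ℤ,
        Real.exp (-(b ^ 2 / (4 * a)) * ∑ i, (x i / b - (z i : ℝ)) ^ 2)) /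
      (∑' z : Fin d → ℤ,
        Real.exp (-(b ^ 2 / (4 * a)) * ∑ i, ((z i : ℝ)) ^ 2)) ≤
      ((Real.sqrt (4 * π * a) + b) / (Real.sqrt (4 * π * a) - b)) ^ d :=
  gaussian_lattice_ratio_bounds_general d a b ha hb hab x
end

section
/- Let β > 0, μ < 0, and d ≥ 1. Suppose for each L > 0 and n ≥ 1 a density ϱ_L(n) ≥ 0 satisfies ϱ_L(n) ≤ e^{βμn}(4πnβ)^{-d/2} Σ_{z∈ℤ^d} exp(-L²z²/(4nβ)), and suppose ϱ_L(n) → ϱ(n) as L→∞ for each n, and Σ_{n≥1} ϱ_L(n) = ρ_L → ρ. Then Σ_{n≥1} ϱ(n) = ρ; i.e., the density of particles in infinite cycles ρ - Σ_{n≥1} ϱ(n) is zero. -/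
/-!
For `L ≥ 1` the image sum is at most `(1 + 8nβ)^d`: it factorizes over the coordinates, and each
one-dimensional Gaussian sum `∑_{k ∈ ℤ} e^{-a k²}` is at most `1 + 2/a` by comparison with a geometric
series. Hence `ϱ_L(n) ≤ C n^d e^{βμn}` uniformly in `L ≥ 1`, which is summable because `μ < 0`, and
dominated convergence lets the limit `L → ∞` pass through the sum `∑ₙ ϱ_L(n) = ρ_L`.
-/

open Real Filter
open scoped ENNReal

theorem ENNReal.tsum_fin_pi_prod {ι : Type*} :
    ∀ {d : ℕ} (g : Fin d → ι → ℝ≥0∞), ∑' z : Fin d → ι, ∏ i, g i (z i) = ∏ i, ∑' k, g i k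
  | 0, g => by simp
  | d + 1, g => by
    rw [← (Fin.consEquiv fun _ ↦ ι).tsum_eq, ENNReal.tsum_prod', Fin.prod_univ_succ,
      ← tsum_fin_pi_prod, ← ENNReal.tsum_mul_right]
    refine tsum_congr fun k ↦ ?_
    rw [← ENNReal.tsum_mul_left]
    simp [Fin.consEquiv, Fin.prod_univ_succ]

theorem hasSum_geometric_succ_of_lt_one {r : ℝ} (h₁ : 0 ≤ r) (h₂ : r < 1) :
    HasSum (fun n : ℕ ↦ r ^ (n + 1)) (r / (1 - r)) := by
  simpa [pow_succ, div_eq_inv_mul, mul_comm] using (hasSum_geometric_of_lt_one h₁ h₂).mul_right r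

theorem exp_neg_div_one_sub_exp_neg_le {a : ℝ} (ha : 0 < a) :
    exp (-a) / (1 - exp (-a)) ≤ 1 / a := by
  have hlt : exp (-a) < 1 := exp_lt_one_iff.mpr (neg_lt_zero.mpr ha)
  have hinv : exp (-a) * exp a = 1 := by rw [← exp_add, neg_add_cancel, exp_zero]
  rw [div_le_div_iff₀ (by linarith) ha]
  nlinarith [exp_pos (-a), add_one_le_exp a]

theorem exp_neg_mul_sq_le_pow {a : ℝ} (ha : 0 ≤ a) (n : ℕ) :
    exp (-(a * n ^ 2)) ≤ exp (-a) ^ n := by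
  have hn : (n : ℝ) ≤ (n : ℝ) ^ 2 := by exact_mod_cast Nat.le_self_pow two_ne_zero n
  rw [← exp_nat_mul]
  gcongr
  nlinarith

theorem exp_neg_mul_int_sq_add_one_le {a : ℝ} (ha : 0 ≤ a) (n : ℕ) :
    exp (-(a * (((n : ℤ) + 1 : ℤ) : ℝ) ^ 2)) ≤ exp (-a) ^ (n + 1) := by
  simpa using exp_neg_mul_sq_le_pow ha (n + 1)

theorem exp_neg_mul_int_sq_neg_add_one_le {a : ℝ} (ha : 0 ≤ a) (n : ℕ) :
    exp (-(a * ((-((n : ℤ) + 1) : ℤ) : ℝ) ^ 2)) ≤ exp (-a) ^ (n + 1) := by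
  rw [Int.cast_neg, neg_sq]
  exact exp_neg_mul_int_sq_add_one_le ha n

theorem summable_exp_neg_mul_int_sq {a : ℝ} (ha : 0 < a) : Summable fun k : ℤ ↦ exp (-(a * k ^ 2)) := by
  have hgeom := hasSum_geometric_succ_of_lt_one (exp_pos (-a)).le
    (exp_lt_one_iff.mpr (neg_lt_zero.mpr ha))
  exact .of_add_one_of_neg_add_one
    (hgeom.summable.of_nonneg_of_le (fun _ ↦ (exp_pos _).le)
      (exp_neg_mul_int_sq_add_one_le ha.le))
    (hgeom.summable.of_nonneg_of_le (fun _ ↦ (exp_pos _).le)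
      (exp_neg_mul_int_sq_neg_add_one_le ha.le))

theorem tsum_exp_neg_mul_int_sq_le {a : ℝ} (ha : 0 < a) : ∑' k : ℤ, exp (-(a * k ^ 2)) ≤ 1 + 2 / a := by
  have hgeom := hasSum_geometric_succ_of_lt_one (exp_pos (-a)).le
    (exp_lt_one_iff.mpr (neg_lt_zero.mpr ha))
  have hs₁ : Summable fun n : ℕ ↦ exp (-(a * (((n : ℤ) + 1 : ℤ) : ℝ) ^ 2)) :=
    hgeom.summable.of_nonneg_of_le (fun _ ↦ (exp_pos _).le) (exp_neg_mul_int_sq_add_one_le ha.le)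
  have hs₂ : Summable fun n : ℕ ↦ exp (-(a * ((-((n : ℤ) + 1) : ℤ) : ℝ) ^ 2)) :=
    hgeom.summable.of_nonneg_of_le (fun _ ↦ (exp_pos _).le)
      (exp_neg_mul_int_sq_neg_add_one_le ha.le)
  have h₁ : ∑' n : ℕ, exp (-(a * (((n : ℤ) + 1 : ℤ) : ℝ) ^ 2)) ≤ exp (-a) / (1 - exp (-a)) :=
    (hs₁.tsum_le_tsum (exp_neg_mul_int_sq_add_one_le ha.le) hgeom.summable).trans_eq
      hgeom.tsum_eq
  have h₂ : ∑' n : ℕ, exp (-(a * ((-((n : ℤ) + 1) : ℤ) : ℝ) ^ 2)) ≤ exp (-a) / (1 - exp (-a)) :=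
    (hs₂.tsum_le_tsum (exp_neg_mul_int_sq_neg_add_one_le ha.le) hgeom.summable).trans_eq
      hgeom.tsum_eq
  have h₃ := exp_neg_div_one_sub_exp_neg_le ha
  rw [tsum_of_add_one_of_neg_add_one (f := fun k : ℤ ↦ exp (-(a * k ^ 2))) hs₁ hs₂]
  simp only [Int.cast_zero, zero_pow two_ne_zero, mul_zero, neg_zero, exp_zero]
  linarith [show 2 / a = 2 * (1 / a) by ring]

theorem tsum_exp_neg_mul_sum_sq_le (d : ℕ) {a : ℝ} (ha : 0 < a) :
    ∑' z : Fin d → ℤ, exp (-(a * ∑ i, (z i : ℝ) ^ 2)) ≤ (1 + 2 / a) ^ d := by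
  have hfactor : ∀ z : Fin d → ℤ, ENNReal.ofReal (exp (-(a * ∑ i, (z i : ℝ) ^ 2))) =
      ∏ i, ENNReal.ofReal (exp (-(a * (z i : ℝ) ^ 2))) := fun z ↦ by
    rw [Finset.mul_sum, ← Finset.sum_neg_distrib, exp_sum,
      ENNReal.ofReal_prod_of_nonneg fun _ _ ↦ (exp_pos _).le]
  have hennreal : ∑' z : Fin d → ℤ, ENNReal.ofReal (exp (-(a * ∑ i, (z i : ℝ) ^ 2))) ≤
      ENNReal.ofReal ((1 + 2 / a) ^ d) := calc
    _ = ∏ _i : Fin d, ∑' k : ℤ, ENNReal.ofReal (exp (-(a * (k : ℝ) ^ 2))) := by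
      simp_rw [hfactor]
      exact ENNReal.tsum_fin_pi_prod fun _ (k : ℤ) ↦ ENNReal.ofReal (exp (-(a * (k : ℝ) ^ 2)))
    _ = ENNReal.ofReal (∑' k : ℤ, exp (-(a * (k : ℝ) ^ 2))) ^ d := by
      rw [ENNReal.ofReal_tsum_of_nonneg (fun _ ↦ (exp_pos _).le) (summable_exp_neg_mul_int_sq ha),
        Finset.prod_const, Finset.card_fin]
    _ ≤ ENNReal.ofReal ((1 + 2 / a) ^ d) := by
      rw [ENNReal.ofReal_pow (by positivity)]
      gcongr
      exact tsum_exp_neg_mul_int_sq_le ha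
  calc ∑' z : Fin d → ℤ, exp (-(a * ∑ i, (z i : ℝ) ^ 2))
      = (∑' z : Fin d → ℤ, ENNReal.ofReal (exp (-(a * ∑ i, (z i : ℝ) ^ 2)))).toReal := by
        simp [ENNReal.tsum_toReal_eq, (exp_pos _).le]
    _ ≤ (ENNReal.ofReal ((1 + 2 / a) ^ d)).toReal :=
        ENNReal.toReal_mono ENNReal.ofReal_ne_top hennreal
    _ = (1 + 2 / a) ^ d := ENNReal.toReal_ofReal (by positivity)

/-- The heat kernel of the torus `(ℝ / L ℤ) ^ d` at the origin at time `t`, as a sum over images. -/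
noncomputable def torusHeatKernel (d : ℕ) (L t : ℝ) : ℝ :=
  (4 * π * t) ^ (-(d : ℝ) / 2) * ∑' z : Fin d → ℤ, exp (-(L ^ 2 * ∑ i, (z i : ℝ) ^ 2) / (4 * t))

theorem torusHeatKernel_le (d : ℕ) {L t : ℝ} (hL : 0 < L) (ht : 0 < t) :
    torusHeatKernel d L t ≤ (4 * π * t) ^ (-(d : ℝ) / 2) * (1 + 8 * t / L ^ 2) ^ d := by
  have hsum := tsum_exp_neg_mul_sum_sq_le d (a := L ^ 2 / (4 * t)) (by positivity)
  rw [show 2 / (L ^ 2 / (4 * t)) = 8 * t / L ^ 2 by field_simp; ring] at hsum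
  unfold torusHeatKernel
  gcongr
  refine (tsum_congr fun z ↦ ?_).trans_le hsum
  congr 1
  ring

theorem torusHeatKernel_mul_le (d : ℕ) {L n β : ℝ} (hL : 1 ≤ L) (hn : 1 ≤ n) (hβ : 0 < β) :
    torusHeatKernel d L (n * β) ≤ (4 * π * β) ^ (-(d : ℝ) / 2) * (1 + 8 * β) ^ d * n ^ d := by
  have hdecay : (4 * π * (n * β)) ^ (-(d : ℝ) / 2) ≤ (4 * π * β) ^ (-(d : ℝ) / 2) :=
    rpow_le_rpow_of_nonpos (by positivity)
      (mul_le_mul_of_nonneg_left (le_mul_of_one_le_left hβ.le hn) (by positivity))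
      (by have : (0 : ℝ) ≤ d := d.cast_nonneg; linarith)
  have hgrowth : 1 + 8 * (n * β) / L ^ 2 ≤ (1 + 8 * β) * n := by
    have : 8 * (n * β) / L ^ 2 ≤ 8 * (n * β) := div_le_self (by positivity) (one_le_pow₀ hL)
    linarith
  calc torusHeatKernel d L (n * β)
      ≤ (4 * π * (n * β)) ^ (-(d : ℝ) / 2) * (1 + 8 * (n * β) / L ^ 2) ^ d :=
        torusHeatKernel_le d (by linarith) (by positivity)
    _ ≤ (4 * π * β) ^ (-(d : ℝ) / 2) * ((1 + 8 * β) * n) ^ d := by gcongr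
    _ = (4 * π * β) ^ (-(d : ℝ) / 2) * (1 + 8 * β) ^ d * n ^ d := by rw [mul_pow]; ring

theorem no_infinite_cycles_negative_mu_general (d : ℕ)
    (β μ : ℝ) (hβ : 0 < β) (hμ : μ < 0)
    (ϱL : ℝ → ℕ → ℝ) (ϱ : ℕ → ℝ) (ρL : ℝ → ℝ) (ρ : ℝ)
    (hnonneg : ∀ L, ∀ n, 1 ≤ n → 0 ≤ ϱL L n)
    (hbound : ∀ L, 0 < L → ∀ n, 1 ≤ n →
      ϱL L n ≤ Real.exp (β * μ * n) * (4 * π * n * β) ^ (-(d : ℝ) / 2) *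
        ∑' z : Fin d → ℤ, Real.exp (-(L ^ 2 * ∑ i, ((z i : ℝ)) ^ 2) / (4 * n * β)))
    (hlim : ∀ n, 1 ≤ n → Tendsto (fun L => ϱL L n) atTop (nhds (ϱ n)))
    (hsum : ∀ L, HasSum (fun n : ℕ => ϱL L (n + 1)) (ρL L))
    (hρ : Tendsto ρL atTop (nhds ρ)) :
    ∑' n : ℕ, ϱ (n + 1) = ρ := by
  set C := (4 * π * β) ^ (-(d : ℝ) / 2) * (1 + 8 * β) ^ d
  have hdominated : ∀ L, 1 ≤ L → ∀ k : ℕ,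
      ‖ϱL L (k + 1)‖ ≤ C * (((k + 1 : ℕ) : ℝ) ^ d * exp (β * μ * (k + 1 : ℕ))) := by
    intro L hL k
    have hk : 1 ≤ k + 1 := k.succ_pos
    rw [norm_of_nonneg (hnonneg L _ hk)]
    calc ϱL L (k + 1)
        ≤ exp (β * μ * (k + 1 : ℕ)) * torusHeatKernel d L ((k + 1 : ℕ) * β) := by
          simpa only [torusHeatKernel, mul_assoc] using hbound L (by linarith) _ hk
      _ ≤ exp (β * μ * (k + 1 : ℕ)) * (C * ((k + 1 : ℕ) : ℝ) ^ d) := by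
          gcongr
          exact torusHeatKernel_mul_le d hL (by exact_mod_cast hk) hβ
      _ = C * (((k + 1 : ℕ) : ℝ) ^ d * exp (β * μ * (k + 1 : ℕ))) := by ring
  have hsummable : Summable fun k : ℕ ↦
      C * (((k + 1 : ℕ) : ℝ) ^ d * exp (β * μ * (k + 1 : ℕ))) := by
    have := (summable_nat_add_iff 1).mpr
      (summable_pow_mul_exp_neg_nat_mul d (neg_pos.mpr (mul_neg_of_pos_of_neg hβ hμ)))
    simpa only [neg_neg] using this.mul_left C
  have hconv := tendsto_tsum_of_dominated_convergence hsummable (fun k ↦ hlim _ k.succ_pos)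
    ((eventually_ge_atTop 1).mono hdominated)
  simp only [fun L ↦ (hsum L).tsum_eq] at hconv
  exact tendsto_nhds_unique hconv hρ

theorem no_infinite_cycles_negative_mu (d : ℕ) (hd : 1 ≤ d)
    (β μ : ℝ) (hβ : 0 < β) (hμ : μ < 0)
    (ϱL : ℝ → ℕ → ℝ) (ϱ : ℕ → ℝ) (ρL : ℝ → ℝ) (ρ : ℝ)
    (hnonneg : ∀ L, ∀ n, 1 ≤ n → 0 ≤ ϱL L n)
    (hbound : ∀ L, 0 < L → ∀ n, 1 ≤ n →
      ϱL L n ≤ Real.exp (β * μ * n) * (4 * π * n * β) ^ (-(d : ℝ) / 2) *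
        ∑' z : Fin d → ℤ, Real.exp (-(L ^ 2 * ∑ i, ((z i : ℝ)) ^ 2) / (4 * n * β)))
    (hlim : ∀ n, 1 ≤ n → Tendsto (fun L => ϱL L n) atTop (nhds (ϱ n)))
    (hsum : ∀ L, HasSum (fun n : ℕ => ϱL L (n + 1)) (ρL L))
    (hρ : Tendsto ρL atTop (nhds ρ)) :
    ∑' n : ℕ, ϱ (n + 1) = ρ :=
  no_infinite_cycles_negative_mu_general d β μ hβ hμ ϱL ϱ ρL ρ hnonneg hbound hlim hsum hρ
end
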